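/- arXiv:1402.3665 — 4 statements merged into one kernel-verified Lean document; each statement's English description precedes it below -/
import Mathlib

section
/- The R-matrix satisfies the quadratic relation Ř² = (1 − r s^{-1}) Ř + (r s^{-1}) Id on V ⊗ V. -/
/-!
Let `P` be the flip `v_i ⊗ v_j ↦ v_j ⊗ v_i` and `A` the projection onto the span of the
`v_i ⊗ v_j` with `i > j`. Then `PAP` projects onto the span of the `v_i ⊗ v_j` with `i < j`, so
`Ř = (1 - A - PAP) + r AP + s⁻¹ PA + (1 - r s⁻¹) A`, and the quadratic relation is a formal
consequence of `P² = 1`, `A² = A` and `APA = 0`. (On the plane spanned by `v_i ⊗ v_j` and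
`v_j ⊗ v_i` it is Cayley–Hamilton for a `2 × 2` matrix of trace `1 - r s⁻¹` and determinant
`-r s⁻¹`.)
-/

open Matrix Kronecker BigOperators

/-- The two-parameter R-matrix `Ř` on `V ⊗ V`, `V = ℂⁿ`, written in the basis
`v_i ⊗ v_j ↔ (i,j)`:
`Ř = Σᵢ Eᵢᵢ⊗Eᵢᵢ + r Σ_{i<j} Eⱼᵢ⊗Eᵢⱼ + s⁻¹ Σ_{i<j} Eᵢⱼ⊗Eⱼᵢ + (1 − r s⁻¹) Σ_{i<j} Eⱼⱼ⊗Eᵢᵢ`. -/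
noncomputable def Rhat (n : ℕ) (r s : ℂ) : Matrix (Fin n × Fin n) (Fin n × Fin n) ℂ :=
  (∑ i : Fin n, Matrix.single i i (1:ℂ) ⊗ₖ Matrix.single i i (1:ℂ))
  + r • (∑ i : Fin n, ∑ j : Fin n,
      if i < j then Matrix.single j i (1:ℂ) ⊗ₖ Matrix.single i j (1:ℂ) else 0)
  + s⁻¹ • (∑ i : Fin n, ∑ j : Fin n,
      if i < j then Matrix.single i j (1:ℂ) ⊗ₖ Matrix.single j i (1:ℂ) else 0)
  + (1 - r * s⁻¹) • (∑ i : Fin n, ∑ j : Fin n,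
      if i < j then Matrix.single j j (1:ℂ) ⊗ₖ Matrix.single i i (1:ℂ) else 0)

/-- Given an operator `M` on `V ⊗ V`, the operator on `V^{⊗m}` acting as `M` in the
tensor factors `(a, b)` (with `a ≠ b`) and as the identity in all other factors.
Here `V^{⊗m}` is identified with `(Fin m → Fin n) → ℂ` via the basis
`v_{f 0} ⊗ ⋯ ⊗ v_{f (m-1)} ↔ f`. -/
noncomputable def op2At (n m : ℕ) (M : Matrix (Fin n × Fin n) (Fin n × Fin n) ℂ)
    (a b : Fin m) : Matrix (Fin m → Fin n) (Fin m → Fin n) ℂ :=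
  fun f g => M (f a, f b) (g a, g b) *
    ∏ l ∈ Finset.univ \ ({a, b} : Finset (Fin m)), (if f l = g l then (1:ℂ) else 0)

theorem mul_self_eq_of_involution_of_idempotent {K R : Type*} [CommRing K] [Ring R] [Algebra K R]
    {A P T : R} (hP : P * P = 1) (hA : A * A = A) (hAPA : A * P * A = 0) (r t : K)
    (hT : T = (1 - A - P * A * P) + r • (A * P) + t • (P * A) + (1 - r * t) • A) :
    T * T = (1 - r * t) • T + (r * t) • 1 := by
  have hPP (x : R) : P * (P * x) = x := by rw [← mul_assoc, hP, one_mul]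
  have hAA (x : R) : A * (A * x) = A * x := by rw [← mul_assoc, hA]
  have hAPA' : A * (P * A) = 0 := by rw [← mul_assoc, hAPA]
  have hAPAx (x : R) : A * (P * (A * x)) = 0 := by rw [← mul_assoc, ← mul_assoc, hAPA, zero_mul]
  subst hT
  -- Right-associated, every word in `A` and `P` reduces to one of `1, A, P, AP, PA, PAP`.
  simp only [mul_add, add_mul, mul_sub, sub_mul, smul_mul_assoc, mul_smul_comm, mul_one, one_mul,
    mul_assoc, hPP, hAA, hAPAx, hAPA', hA, smul_zero, mul_zero]
  module

section
variable (ι K : Type*) [DecidableEq ι] [CommRing K]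

def tensorFlip : Matrix (ι × ι) (ι × ι) K := Equiv.Perm.permMatrix K (Equiv.prodComm ι ι)

variable {ι K}

theorem tensorFlip_apply (p q : ι × ι) : tensorFlip ι K p q = if q = p.swap then 1 else 0 := by
  simp [tensorFlip, PEquiv.toMatrix_apply, eq_comm]

variable [Fintype ι]

theorem tensorFlip_mul_apply (M : Matrix (ι × ι) (ι × ι) K) (p q : ι × ι) :
    (tensorFlip ι K * M) p q = M p.swap q := by
  simp [tensorFlip, PEquiv.toMatrix_toPEquiv_mul]

theorem mul_tensorFlip_apply (M : Matrix (ι × ι) (ι × ι) K) (p q : ι × ι) :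
    (M * tensorFlip ι K) p q = M p q.swap := by
  simp [tensorFlip, PEquiv.mul_toMatrix_toPEquiv]

theorem tensorFlip_mul_tensorFlip : tensorFlip ι K * tensorFlip ι K = 1 := by
  ext p q
  simp [tensorFlip_mul_apply, tensorFlip_apply, one_apply, eq_comm]

variable [LinearOrder ι]

variable (ι K) in
def lowerProj : Matrix (ι × ι) (ι × ι) K := diagonal fun p => if p.2 < p.1 then 1 else 0

theorem lowerProj_mul_lowerProj : lowerProj ι K * lowerProj ι K = lowerProj ι K := by
  rw [lowerProj, diagonal_mul_diagonal]
  congr 1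
  ext p
  split_ifs <;> simp

theorem lowerProj_mul_tensorFlip_mul_lowerProj :
    lowerProj ι K * tensorFlip ι K * lowerProj ι K = 0 := by
  ext p q
  simp only [lowerProj, mul_diagonal, diagonal_mul, tensorFlip_apply, Matrix.zero_apply]
  grind

theorem sum_single_kronecker_single_diag :
    (∑ i : ι, single i i (1 : K) ⊗ₖ single i i (1 : K)) =
      1 - lowerProj ι K - tensorFlip ι K * lowerProj ι K * tensorFlip ι K := by
  ext p q
  simp only [single_kronecker_single, Matrix.sum_apply, single_apply, Prod.ext_iff, mul_one,
    lowerProj, mul_tensorFlip_apply, tensorFlip_mul_apply, Matrix.sub_apply, one_apply,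
    diagonal_apply]
  simp only [ite_and, Prod.fst_swap, Prod.snd_swap, Finset.sum_ite_eq', Finset.mem_univ, if_true]
  grind

theorem sum_single_kronecker_single_lower :
    (∑ i : ι, ∑ j : ι, if i < j then single j i (1 : K) ⊗ₖ single i j (1 : K) else 0) =
      lowerProj ι K * tensorFlip ι K := by
  ext p q
  simp only [single_kronecker_single, Matrix.sum_apply, Matrix.zero_apply, single_apply,
    apply_ite (fun M : Matrix (ι × ι) (ι × ι) K => M p q), Prod.ext_iff, mul_one, lowerProj,
    diagonal_mul, tensorFlip_apply]
  simp only [ite_and, ite_ite_distrib_right (p := _ < _), ite_self, Prod.fst_swap, Prod.snd_swap,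
    Finset.sum_ite_eq', Finset.mem_univ, if_true]
  grind

theorem sum_single_kronecker_single_upper :
    (∑ i : ι, ∑ j : ι, if i < j then single i j (1 : K) ⊗ₖ single j i (1 : K) else 0) =
      tensorFlip ι K * lowerProj ι K := by
  ext p q
  simp only [single_kronecker_single, Matrix.sum_apply, Matrix.zero_apply, single_apply,
    apply_ite (fun M : Matrix (ι × ι) (ι × ι) K => M p q), Prod.ext_iff, mul_one, lowerProj,
    diagonal_apply, tensorFlip_mul_apply]
  simp only [ite_and, ite_ite_distrib_right (p := _ < _), ite_self, Finset.sum_ite_irrel,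
    Finset.sum_const_zero, Prod.fst_swap, Prod.snd_swap, Finset.sum_ite_eq', Finset.mem_univ,
    if_true]

theorem sum_single_kronecker_single_lower_diag :
    (∑ i : ι, ∑ j : ι, if i < j then single j j (1 : K) ⊗ₖ single i i (1 : K) else 0) =
      lowerProj ι K := by
  ext p q
  simp only [single_kronecker_single, Matrix.sum_apply, Matrix.zero_apply, single_apply,
    apply_ite (fun M : Matrix (ι × ι) (ι × ι) K => M p q), Prod.ext_iff, mul_one, lowerProj,
    diagonal_apply]
  simp only [ite_and, ite_ite_distrib_right (p := _ < _), ite_self, Finset.sum_ite_eq',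
    Finset.mem_univ, if_true]

end

theorem Rhat_quadratic_general (n : ℕ) (r s : ℂ) :
    Rhat n r s * Rhat n r s = (1 - r * s⁻¹) • Rhat n r s + (r * s⁻¹) • (1 : Matrix (Fin n × Fin n) (Fin n × Fin n) ℂ) := by
  refine mul_self_eq_of_involution_of_idempotent tensorFlip_mul_tensorFlip lowerProj_mul_lowerProj
    lowerProj_mul_tensorFlip_mul_lowerProj r s⁻¹ ?_
  rw [Rhat, sum_single_kronecker_single_diag, sum_single_kronecker_single_lower,
    sum_single_kronecker_single_upper, sum_single_kronecker_single_lower_diag]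

/-- **Quadratic (Hecke) relation.** `Ř² = (1 − r s⁻¹) Ř + (r s⁻¹) Id` on `V ⊗ V`. -/
theorem Rhat_quadratic (n : ℕ) (hn : 1 ≤ n) (r s : ℂ) (hr : r ≠ 0) (hs : s ≠ 0) :
    Rhat n r s * Rhat n r s = (1 - r * s⁻¹) • Rhat n r s + (r * s⁻¹) • (1 : Matrix (Fin n × Fin n) (Fin n × Fin n) ℂ) :=
  Rhat_quadratic_general n r s
end

section
/- If n ≥ 2 and s ≠ −r, then the minimal polynomial of the R-matrix Ř acting on V ⊗ V is (t − 1)(t + r s^{-1}). -/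
open Matrix Kronecker BigOperators

/-!
On `v_i ⊗ v_i` the operator `Ř` acts as the identity, and for `i < j` it preserves the plane
spanned by `v_i ⊗ v_j` and `v_j ⊗ v_i`, acting there by a `2 × 2` matrix with trace `1 - r s⁻¹`
and determinant `-r s⁻¹`. Hence `Ř` satisfies the Hecke relation `Ř² = (1 - r s⁻¹) Ř + r s⁻¹`,
and since its entry `r` off the diagonal keeps it from being a scalar, the minimal polynomial
is the whole quadratic `(t - 1)(t + r s⁻¹)`.
-/

open Polynomial in
theorem minpoly_eq_of_aeval_eq_zero_of_natDegree_eq_two {K A : Type*} [Field K] [Ring A]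
    [Algebra K A] {x : A} {p : K[X]} (hp : p.Monic) (hdeg : p.natDegree = 2)
    (hpx : aeval x p = 0) (hx : x ∉ (algebraMap K A).range) : minpoly K x = p := by
  have hint : IsIntegral K x := ⟨p, hp, hpx⟩
  have : Nontrivial A := nontrivial_of_ne x 0 fun h => hx ⟨0, by simp [h]⟩
  refine (eq_of_monic_of_dvd_of_natDegree_le (minpoly.monic hint) hp (minpoly.dvd K x hpx) ?_).symm
  rw [hdeg]
  exact (minpoly.two_le_natDegree_iff hint).2 hx

section
variable {n : ℕ} (r s : ℂ)

theorem Rhat_apply (a b c d : Fin n) :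
    Rhat n r s (a, b) (c, d) =
      (if a = b ∧ b = c ∧ c = d then 1 else 0)
      + (if c = b ∧ d = a ∧ b < a then r else 0)
      + (if c = b ∧ d = a ∧ a < b then s⁻¹ else 0)
      + (if c = a ∧ d = b ∧ b < a then 1 - r * s⁻¹ else 0) := by
  simp only [Rhat, single_kronecker_single, Matrix.add_apply, Matrix.smul_apply, Matrix.sum_apply,
    apply_ite (fun M : Matrix (Fin n × Fin n) (Fin n × Fin n) ℂ => M (a, b) (c, d)), single_apply,
    Prod.mk.injEq, Matrix.zero_apply, smul_eq_mul, mul_one]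
  congr 1; congr 1; congr 1
  · rw [Fintype.sum_eq_single a fun x hx => by simp [hx]]
    grind
  · rw [Fintype.sum_eq_single b fun x hx => by simp [hx],
      Fintype.sum_eq_single a fun y hy => by simp [hy]]
    grind
  · rw [Fintype.sum_eq_single a fun x hx => by simp [hx],
      Fintype.sum_eq_single b fun y hy => by simp [hy]]
    grind
  · rw [Fintype.sum_eq_single b fun x hx => by simp [hx],
      Fintype.sum_eq_single a fun y hy => by simp [hy]]
    grind

theorem Rhat_row_self (a : Fin n) : Rhat n r s (a, a) = Pi.single (a, a) 1 := by
  funext ⟨c, d⟩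
  simp only [Rhat_apply, Pi.single_apply, Prod.mk.injEq]
  split_ifs <;> grind

theorem Rhat_row_of_lt {a b : Fin n} (h : a < b) : Rhat n r s (a, b) = Pi.single (b, a) s⁻¹ := by
  funext ⟨c, d⟩
  simp only [Rhat_apply, Pi.single_apply, Prod.mk.injEq]
  split_ifs <;> grind

theorem Rhat_row_of_gt {a b : Fin n} (h : a < b) :
    Rhat n r s (b, a) = Pi.single (a, b) r + Pi.single (b, a) (1 - r * s⁻¹) := by
  funext ⟨c, d⟩
  simp only [Rhat_apply, Pi.add_apply, Pi.single_apply, Prod.mk.injEq]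
  split_ifs <;> grind

theorem Rhat_mul_self :
    Rhat n r s * Rhat n r s = (1 - r * s⁻¹) • Rhat n r s + (r * s⁻¹) • 1 := by
  funext ⟨a, b⟩
  have hrhs : ((1 - r * s⁻¹) • Rhat n r s + (r * s⁻¹) • 1 : Matrix _ _ ℂ) (a, b) =
      (1 - r * s⁻¹) • Rhat n r s (a, b) + (r * s⁻¹) • Pi.single (a, b) 1 := by
    funext x
    simp [one_eq_pi_single]
  rw [mul_apply_eq_vecMul, hrhs]
  rcases lt_trichotomy a b with h | rfl | h <;> [
    rw [Rhat_row_of_lt r s h, single_vecMul, row, Rhat_row_of_gt r s h];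
    rw [Rhat_row_self, single_vecMul, row, Rhat_row_self];
    rw [Rhat_row_of_gt r s h, add_vecMul, single_vecMul, single_vecMul, row, Rhat_row_of_lt r s h,
      Rhat_row_of_gt r s h]] <;>
  · funext x
    simp only [Pi.add_apply, Pi.smul_apply, Pi.single_apply, smul_eq_mul]
    split_ifs <;> grind

theorem Rhat_notMem_range_algebraMap (hn : 2 ≤ n) (hr : r ≠ 0) :
    Rhat n r s ∉ (algebraMap ℂ (Matrix (Fin n × Fin n) (Fin n × Fin n) ℂ)).range := by
  rintro ⟨c, hc⟩
  let i : Fin n := ⟨0, by omega⟩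
  let j : Fin n := ⟨1, by omega⟩
  have hij : i < j := Fin.mk_lt_mk.2 zero_lt_one
  have hentry : Rhat n r s (j, i) (i, j) = r := by
    simp [Rhat_row_of_gt r s hij, hij.ne]
  rw [← hc, algebraMap_matrix_apply, if_neg (by simp [hij.ne'])] at hentry
  exact hr hentry.symm

end

theorem Rhat_minpoly_general (n : ℕ) (hn : 2 ≤ n) (r s : ℂ) (hr : r ≠ 0) :
    minpoly ℂ (Rhat n r s) =
      (Polynomial.X - 1) * (Polynomial.X + Polynomial.C (r * s⁻¹)) := by
  have hmonic : ((Polynomial.X - 1) * (Polynomial.X + Polynomial.C (r * s⁻¹))).Monic := by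
    simpa using (Polynomial.monic_X_sub_C 1).mul (Polynomial.monic_X_add_C (r * s⁻¹))
  refine minpoly_eq_of_aeval_eq_zero_of_natDegree_eq_two hmonic (by compute_degree!) ?_
    (Rhat_notMem_range_algebraMap r s hn hr)
  simp only [map_mul, map_sub, map_add, Polynomial.aeval_X, Polynomial.aeval_C,
    Algebra.algebraMap_eq_smul_one, sub_mul, mul_add, mul_smul_comm, mul_one, one_mul,
    Rhat_mul_self]
  module

/-- **Minimal polynomial of `Ř`.** If `n ≥ 2` and `s ≠ −r`, the minimal polynomial of the
R-matrix `Ř` on `V ⊗ V` is `(t − 1)(t + r s⁻¹)`. -/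
theorem Rhat_minpoly (n : ℕ) (hn : 2 ≤ n) (r s : ℂ) (hr : r ≠ 0) (hs : s ≠ 0)
    (hsr : s ≠ -r) :
    minpoly ℂ (Rhat n r s) =
      (Polynomial.X - 1) * (Polynomial.X + Polynomial.C (r * s⁻¹)) :=
  Rhat_minpoly_general n hn r s hr
end

section
/- Let x, y, z be pairwise distinct nonzero complex numbers. Then the normalized two-spectral-parameter R-matrix satisfies Ř_1(x,y) Ř_2(x,z) Ř_1(y,z) = Ř_2(y,z) Ř_1(x,z) Ř_2(x,y) as operators on V ⊗ V ⊗ V, where Ř_1(x,y) = Ř(x,y) ⊗ Id and Ř_2(x,y) = Id ⊗ Ř(x,y). -/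
open Matrix Kronecker BigOperators

/-- The spectral-parameter R-matrix `Ř(z)` on `V ⊗ V`:
`Ř(z) = (1 − z r s⁻¹) Σᵢ Eᵢᵢ⊗Eᵢᵢ + (1 − z)(r Σ_{i>j} + s⁻¹ Σ_{i<j}) Eᵢⱼ⊗Eⱼᵢ
 + z(1 − r s⁻¹) Σ_{i<j} Eᵢᵢ⊗Eⱼⱼ + (1 − r s⁻¹) Σ_{i>j} Eᵢᵢ⊗Eⱼⱼ`. -/
noncomputable def RhatZ (n : ℕ) (r s z : ℂ) : Matrix (Fin n × Fin n) (Fin n × Fin n) ℂ :=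
  (1 - z * (r * s⁻¹)) • (∑ i : Fin n, Matrix.single i i (1:ℂ) ⊗ₖ Matrix.single i i (1:ℂ))
  + (1 - z) • (r • (∑ i : Fin n, ∑ j : Fin n,
        if j < i then Matrix.single i j (1:ℂ) ⊗ₖ Matrix.single j i (1:ℂ) else 0)
      + s⁻¹ • (∑ i : Fin n, ∑ j : Fin n,
        if i < j then Matrix.single i j (1:ℂ) ⊗ₖ Matrix.single j i (1:ℂ) else 0))
  + (z * (1 - r * s⁻¹)) • (∑ i : Fin n, ∑ j : Fin n,
      if i < j then Matrix.single i i (1:ℂ) ⊗ₖ Matrix.single j j (1:ℂ) else 0)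
  + (1 - r * s⁻¹) • (∑ i : Fin n, ∑ j : Fin n,
      if j < i then Matrix.single i i (1:ℂ) ⊗ₖ Matrix.single j j (1:ℂ) else 0)

/-- The normalized two-spectral-parameter R-matrix `Ř(x,y) = (s y / (y − x)) · Ř(x/y)`. -/
noncomputable def RhatXY (n : ℕ) (r s x y : ℂ) : Matrix (Fin n × Fin n) (Fin n × Fin n) ℂ :=
  (s * y / (y - x)) • RhatZ n r s (x / y)

/-!
Put `q = r s⁻¹`. The matrix `Rhat` satisfies the Hecke relation `Ř² = (1 - q) Ř + q` and, acting
in the tensor factors `(1,2)` and `(2,3)` of `V ⊗ V ⊗ V`, the braid relation `Ř₁Ř₂Ř₁ = Ř₂Ř₁Ř₂`.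
Since `Ř(z) = (1 - z) Ř + z (1 - q)`, the normalized matrix is `Ř(x,y) = s (Ř + κ x / (y - x))`
with `κ = 1 - q`, a Baxterization of `Ř`. For any `T₁, T₂` satisfying the braid relation and a
quadratic relation `T² = κ T + c`, expanding both sides of the Yang–Baxter equation for
`Tᵢ + κ x / (y - x)` leaves only the scalar identity `β (κ + α + γ) = α γ`, where
`α = κ x / (y - x)`, `β = κ x / (z - x)`, `γ = κ y / (z - y)`.
-/

theorem Function.update_update_apply_of_mem_sdiff {ι β : Type*} [DecidableEq ι] [Fintype ι]
    {a b l : ι} (f : ι → β) (c d : β) (hl : l ∈ Finset.univ \ ({a, b} : Finset ι)) :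
    Function.update (Function.update f a c) b d l = f l := by
  simp only [Finset.mem_sdiff, Finset.mem_insert, Finset.mem_singleton, not_or] at hl
  simp [hl.2.1, hl.2.2]

theorem Matrix.single_one_mul_apply {l m o α : Type*} [Fintype m] [DecidableEq l] [DecidableEq m]
    [Semiring α] (i a : l) (j : m) (b : o) (M : Matrix m o α) :
    (Matrix.single i j (1 : α) * M) a b = if i = a then M j b else 0 := by
  split_ifs with h
  · subst h
    simp
  · exact Matrix.single_mul_apply_of_ne _ _ _ _ _ (Ne.symm h) M

section Baxterization

variable {K A B : Type*} [Field K] [Ring A] [Algebra K A] [Ring B] [Algebra K B]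

def baxterize (T : A) (κ x y : K) : A := T + (κ * x / (y - x)) • 1

theorem AlgHom.map_baxterize (φ : A →ₐ[K] B) (T : A) (κ x y : K) :
    φ (baxterize T κ x y) = baxterize (φ T) κ x y := by
  rw [baxterize, baxterize, map_add, map_smul, map_one]

theorem baxterize_yangBaxter {T₁ T₂ : A} {κ c : K}
    (hT₁ : T₁ * T₁ = κ • T₁ + c • 1) (hT₂ : T₂ * T₂ = κ • T₂ + c • 1)
    (hbraid : T₁ * T₂ * T₁ = T₂ * T₁ * T₂) {x y z : K} (hxy : x ≠ y) (hxz : x ≠ z)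
    (hyz : y ≠ z) :
    baxterize T₁ κ x y * baxterize T₂ κ x z * baxterize T₁ κ y z =
      baxterize T₂ κ y z * baxterize T₁ κ x z * baxterize T₂ κ x y := by
  have hyx : y - x ≠ 0 := sub_ne_zero.2 hxy.symm
  have hzx : z - x ≠ 0 := sub_ne_zero.2 hxz.symm
  have hzy : z - y ≠ 0 := sub_ne_zero.2 hyz.symm
  simp only [baxterize, add_mul, mul_add, smul_mul_assoc, mul_smul_comm, one_mul, mul_one,
    smul_smul, smul_add]
  rw [hbraid, hT₁, hT₂]
  match_scalars <;> field_simp <;> ring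

end Baxterization

section Op2At

variable {n m : ℕ} {a b : Fin m}

theorem op2At_mul_apply (hab : a ≠ b) {ι : Type*} (M : Matrix (Fin n × Fin n) (Fin n × Fin n) ℂ)
    (H : Matrix (Fin m → Fin n) ι ℂ) (f : Fin m → Fin n) (g : ι) :
    (op2At n m M a b * H) f g =
      ∑ c, ∑ d, M (f a, f b) (c, d) * H (Function.update (Function.update f a c) b d) g := by
  rw [← Fintype.sum_prod_type', Matrix.mul_apply]
  symm
  -- Only rows `h` agreeing with `f` off `{a, b}` contribute; they are parametrized by `(h a, h b)`.
  refine Fintype.sum_of_injective (fun cd => Function.update (Function.update f a cd.1) b cd.2)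
    ?_ _ _ ?_ ?_
  · rintro ⟨c, d⟩ ⟨c', d'⟩ h
    have ha := congrFun h a
    have hb := congrFun h b
    simp only [Function.update_self, Function.update_of_ne hab] at ha hb
    rw [ha, hb]
  · intro h hh
    obtain ⟨l, hl, hfl⟩ : ∃ l ∉ ({a, b} : Finset (Fin m)), f l ≠ h l := by
      by_contra! hfh
      refine hh ⟨(h a, h b), funext fun l => ?_⟩
      by_cases hlb : l = b
      · simp [hlb]
      by_cases hla : l = a
      · simp [hla, hab]
      simp [hla, hlb, hfh l (by simp [hla, hlb])]
    rw [op2At, Finset.prod_eq_zero (Finset.mem_sdiff.2 ⟨Finset.mem_univ l, hl⟩) (if_neg hfl)]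
    simp
  · rintro ⟨c, d⟩
    rw [op2At, Finset.prod_eq_one fun l hl => by
      rw [Function.update_update_apply_of_mem_sdiff f c d hl, if_pos rfl]]
    simp [Function.update_of_ne hab]

theorem op2At_one (hab : a ≠ b) : op2At n m 1 a b = 1 := by
  ext f g
  by_cases hfg : f = g
  · subst hfg
    simp [op2At]
  obtain ⟨l, hl⟩ := Function.ne_iff.1 hfg
  rw [Matrix.one_apply_ne hfg, op2At]
  by_cases hlab : l ∈ ({a, b} : Finset (Fin m))
  · rw [Finset.mem_insert, Finset.mem_singleton] at hlab
    have hpair : (f a, f b) ≠ (g a, g b) := by rcases hlab with rfl | rfl <;> simp [hl]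
    rw [Matrix.one_apply_ne hpair, zero_mul]
  · rw [Finset.prod_eq_zero (Finset.mem_sdiff.2 ⟨Finset.mem_univ l, hlab⟩) (if_neg hl), mul_zero]

theorem op2At_mul (hab : a ≠ b) (M N : Matrix (Fin n × Fin n) (Fin n × Fin n) ℂ) :
    op2At n m M a b * op2At n m N a b = op2At n m (M * N) a b := by
  ext f g
  have hprod : ∀ c d, ∏ l ∈ Finset.univ \ ({a, b} : Finset (Fin m)),
      (if Function.update (Function.update f a c) b d l = g l then (1 : ℂ) else 0) =
      ∏ l ∈ Finset.univ \ ({a, b} : Finset (Fin m)), if f l = g l then 1 else 0 := fun c d =>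
    Finset.prod_congr rfl fun l hl => by rw [Function.update_update_apply_of_mem_sdiff f c d hl]
  simp only [op2At_mul_apply hab, op2At, Function.update_self, Function.update_of_ne hab, hprod,
    Matrix.mul_apply, Fintype.sum_prod_type, Finset.sum_mul, mul_assoc]

theorem op2At_add (M N : Matrix (Fin n × Fin n) (Fin n × Fin n) ℂ) :
    op2At n m (M + N) a b = op2At n m M a b + op2At n m N a b := by
  ext f g
  simp [op2At, add_mul]

theorem op2At_smul (c : ℂ) (M : Matrix (Fin n × Fin n) (Fin n × Fin n) ℂ) :
    op2At n m (c • M) a b = c • op2At n m M a b := by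
  ext f g
  simp [op2At, mul_assoc]

noncomputable def op2AtAlgHom (n : ℕ) (hab : a ≠ b) :
    Matrix (Fin n × Fin n) (Fin n × Fin n) ℂ →ₐ[ℂ] Matrix (Fin m → Fin n) (Fin m → Fin n) ℂ :=
  AlgHom.ofLinearMap
    { toFun := fun M => op2At n m M a b
      map_add' := op2At_add
      map_smul' := op2At_smul }
    (op2At_one hab) fun M N => (op2At_mul hab M N).symm

@[simp]
theorem op2AtAlgHom_apply (hab : a ≠ b) (M : Matrix (Fin n × Fin n) (Fin n × Fin n) ℂ) :
    op2AtAlgHom n hab M = op2At n m M a b := rfl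

end Op2At

section Rhat

variable {n : ℕ} (r s : ℂ)

noncomputable def rhatSwapCoeff (p q : Fin n) : ℂ :=
  if p = q then 1 else if p < q then s⁻¹ else r

noncomputable def rhatDiagCoeff (p q : Fin n) : ℂ :=
  if q < p then 1 - r * s⁻¹ else 0

section Coeff

variable {p q : Fin n}

@[simp]
theorem rhatSwapCoeff_self : rhatSwapCoeff r s p p = 1 := if_pos rfl

theorem rhatSwapCoeff_of_lt (h : p < q) : rhatSwapCoeff r s p q = s⁻¹ := by
  simp [rhatSwapCoeff, h, h.ne]

theorem rhatSwapCoeff_of_gt (h : q < p) : rhatSwapCoeff r s p q = r := by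
  simp [rhatSwapCoeff, h.ne', not_lt_of_gt h]

@[simp]
theorem rhatDiagCoeff_self : rhatDiagCoeff r s p p = 0 := if_neg (lt_irrefl p)

theorem rhatDiagCoeff_of_lt (h : p < q) : rhatDiagCoeff r s p q = 0 := if_neg (not_lt_of_gt h)

theorem rhatDiagCoeff_of_gt (h : q < p) : rhatDiagCoeff r s p q = 1 - r * s⁻¹ := if_pos h

end Coeff

theorem Rhat_mul_apply {ι : Type*} (H : Matrix (Fin n × Fin n) ι ℂ) (p q : Fin n) (x : ι) :
    (Rhat n r s * H) (p, q) x =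
      rhatSwapCoeff r s p q * H (q, p) x + rhatDiagCoeff r s p q * H (p, q) x := by
  have hite : ∀ (P : Prop) [Decidable P] (M : Matrix (Fin n × Fin n) (Fin n × Fin n) ℂ),
      ((if P then M else 0) * H) (p, q) x = if P then (M * H) (p, q) x else 0 := by
    intros
    split_ifs <;> simp
  rw [Rhat]
  simp only [single_kronecker_single, mul_one, Matrix.add_mul, Matrix.sum_mul, Matrix.smul_mul]
  simp only [Matrix.add_apply, Matrix.smul_apply, Matrix.sum_apply, Matrix.single_one_mul_apply,
    hite, Prod.mk.injEq, smul_eq_mul, ite_and, ite_ite_distrib_right (p := (_ : Fin n) < _),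
    ite_self, Finset.sum_ite_eq', Finset.mem_univ, if_true]
  rcases lt_trichotomy p q with h | rfl | h
  · simp [rhatSwapCoeff_of_lt r s h, rhatDiagCoeff_of_lt r s h, h, h.ne, not_lt_of_gt h]
  · simp
  · simp [rhatSwapCoeff_of_gt r s h, rhatDiagCoeff_of_gt r s h, h, h.ne', not_lt_of_gt h]

theorem Rhat_apply_s7 (p q : Fin n) (x : Fin n × Fin n) :
    Rhat n r s (p, q) x = rhatSwapCoeff r s p q * (1 : Matrix _ _ ℂ) (q, p) x +
      rhatDiagCoeff r s p q * (1 : Matrix _ _ ℂ) (p, q) x := by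
  simpa using Rhat_mul_apply r s 1 p q x

theorem RhatZ_eq (z : ℂ) : RhatZ n r s z = (1 - z) • Rhat n r s + (z * (1 - r * s⁻¹)) • 1 := by
  ext ⟨p, q⟩ ⟨c, d⟩
  have hite : ∀ (P : Prop) [Decidable P] (M : Matrix (Fin n × Fin n) (Fin n × Fin n) ℂ),
      (if P then M else 0) (p, q) (c, d) = if P then M (p, q) (c, d) else 0 := by
    intros
    split_ifs <;> rfl
  simp only [RhatZ, Rhat, single_kronecker_single, mul_one, Matrix.add_apply, Matrix.smul_apply,
    Matrix.sum_apply, hite, Matrix.single_apply, Matrix.one_apply, Prod.mk.injEq, smul_eq_mul,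
    ite_and, ite_ite_distrib_right (p := (_ : Fin n) < _), ite_self, Finset.sum_ite_eq',
    Finset.sum_ite_irrel, Finset.sum_const_zero, Finset.mem_univ, if_true]
  split_ifs <;> first | ring1 | omega

theorem RhatXY_eq_smul_baxterize {x y : ℂ} (hy : y ≠ 0) (hxy : x ≠ y) :
    RhatXY n r s x y = s • baxterize (Rhat n r s) (1 - r * s⁻¹) x y := by
  have hyx : y - x ≠ 0 := sub_ne_zero.2 hxy.symm
  rw [RhatXY, RhatZ_eq, baxterize, smul_add, smul_add, smul_smul, smul_smul, smul_smul]
  congr 2 <;> field_simp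

theorem op2At_zero_one_Rhat_mul_apply {ι : Type*} (H : Matrix (Fin 3 → Fin n) ι ℂ)
    (i j k : Fin n) (g : ι) :
    (op2At n 3 (Rhat n r s) 0 1 * H) ![i, j, k] g =
      rhatSwapCoeff r s i j * H ![j, i, k] g + rhatDiagCoeff r s i j * H ![i, j, k] g := by
  have hupd : ∀ c d : Fin n, Function.update (Function.update ![i, j, k] 0 c) 1 d = ![c, d, k] :=
    fun c d => by ext l; fin_cases l <;> rfl
  have := Rhat_mul_apply r s (Matrix.of fun cd g => H ![cd.1, cd.2, k] g) i j g
  rw [Matrix.mul_apply, Fintype.sum_prod_type] at this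
  simpa [op2At_mul_apply (show (0 : Fin 3) ≠ 1 by decide), hupd] using this

theorem op2At_one_two_Rhat_mul_apply {ι : Type*} (H : Matrix (Fin 3 → Fin n) ι ℂ)
    (i j k : Fin n) (g : ι) :
    (op2At n 3 (Rhat n r s) 1 2 * H) ![i, j, k] g =
      rhatSwapCoeff r s j k * H ![i, k, j] g + rhatDiagCoeff r s j k * H ![i, j, k] g := by
  have hupd : ∀ c d : Fin n, Function.update (Function.update ![i, j, k] 1 c) 2 d = ![i, c, d] :=
    fun c d => by ext l; fin_cases l <;> rfl
  have := Rhat_mul_apply r s (Matrix.of fun cd g => H ![i, cd.1, cd.2] g) j k g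
  rw [Matrix.mul_apply, Fintype.sum_prod_type] at this
  simpa [op2At_mul_apply (show (1 : Fin 3) ≠ 2 by decide), hupd] using this

theorem Rhat_braid :
    op2At n 3 (Rhat n r s) 0 1 * op2At n 3 (Rhat n r s) 1 2 * op2At n 3 (Rhat n r s) 0 1 =
      op2At n 3 (Rhat n r s) 1 2 * op2At n 3 (Rhat n r s) 0 1 * op2At n 3 (Rhat n r s) 1 2 := by
  ext f g
  obtain ⟨i, j, k, rfl⟩ : ∃ i j k, f = ![i, j, k] :=
    ⟨f 0, f 1, f 2, by ext l; fin_cases l <;> rfl⟩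
  rw [← mul_one (_ * _ * op2At n 3 (Rhat n r s) 0 1),
    ← mul_one (_ * _ * op2At n 3 (Rhat n r s) 1 2)]
  simp only [mul_assoc, op2At_zero_one_Rhat_mul_apply, op2At_one_two_Rhat_mul_apply]
  -- Both sides are combinations of the rows of `1` indexed by permutations of `(i, j, k)`,
  -- with coefficients depending only on the relative order of `i`, `j`, `k`.
  rcases lt_trichotomy i j with hij | hij | hij <;>
    rcases lt_trichotomy i k with hik | hik | hik <;>
    rcases lt_trichotomy j k with hjk | hjk | hjk <;>
    first
    | omega
    | (subst_vars
       simp (disch := omega) only [rhatSwapCoeff_self, rhatSwapCoeff_of_lt, rhatSwapCoeff_of_gt,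
         rhatDiagCoeff_self, rhatDiagCoeff_of_lt, rhatDiagCoeff_of_gt] <;> ring)

end Rhat

theorem yang_baxter_normalized_general (n : ℕ) (r s : ℂ)
    (x y z : ℂ) (hy : y ≠ 0) (hz : z ≠ 0)
    (hxy : x ≠ y) (hxz : x ≠ z) (hyz : y ≠ z) :
    op2At n 3 (RhatXY n r s x y) 0 1 * op2At n 3 (RhatXY n r s x z) 1 2 *
        op2At n 3 (RhatXY n r s y z) 0 1 =
      op2At n 3 (RhatXY n r s y z) 1 2 * op2At n 3 (RhatXY n r s x z) 0 1 *
        op2At n 3 (RhatXY n r s x y) 1 2 := by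
  have h01 : (0 : Fin 3) ≠ 1 := by decide
  have h12 : (1 : Fin 3) ≠ 2 := by decide
  have hecke : ∀ φ : Matrix (Fin n × Fin n) (Fin n × Fin n) ℂ →ₐ[ℂ]
      Matrix (Fin 3 → Fin n) (Fin 3 → Fin n) ℂ,
      φ (Rhat n r s) * φ (Rhat n r s) = (1 - r * s⁻¹) • φ (Rhat n r s) + (r * s⁻¹) • 1 :=
    fun φ => by rw [← map_mul, Rhat_mul_self, map_add, map_smul, map_smul, map_one]
  have ybe := baxterize_yangBaxter (hecke (op2AtAlgHom n h01)) (hecke (op2AtAlgHom n h12))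
    (Rhat_braid r s) hxy hxz hyz
  rw [RhatXY_eq_smul_baxterize r s hy hxy, RhatXY_eq_smul_baxterize r s hz hxz,
    RhatXY_eq_smul_baxterize r s hz hyz]
  simp only [← op2AtAlgHom_apply h01, ← op2AtAlgHom_apply h12, map_smul, AlgHom.map_baxterize,
    smul_mul_smul, ybe]

/-- **Yang-Baxter equation for the normalized R-matrix.** For pairwise distinct nonzero
`x, y, z ∈ ℂ`, `Ř_1(x,y) Ř_2(x,z) Ř_1(y,z) = Ř_2(y,z) Ř_1(x,z) Ř_2(x,y)` on `V ⊗ V ⊗ V`,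
where `Ř_1(x,y) = Ř(x,y) ⊗ Id` and `Ř_2(x,y) = Id ⊗ Ř(x,y)`. -/
theorem yang_baxter_normalized (n : ℕ) (hn : 1 ≤ n) (r s : ℂ) (hr : r ≠ 0) (hs : s ≠ 0)
    (x y z : ℂ) (hx : x ≠ 0) (hy : y ≠ 0) (hz : z ≠ 0)
    (hxy : x ≠ y) (hxz : x ≠ z) (hyz : y ≠ z) :
    op2At n 3 (RhatXY n r s x y) 0 1 * op2At n 3 (RhatXY n r s x z) 1 2 *
        op2At n 3 (RhatXY n r s y z) 0 1 =
      op2At n 3 (RhatXY n r s y z) 1 2 * op2At n 3 (RhatXY n r s x z) 0 1 *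
        op2At n 3 (RhatXY n r s x y) 1 2 :=
  yang_baxter_normalized_general n r s x y z hy hz hxy hxz hyz
end

section
/- The Jucys-Murphy operators Y_1, Y_2, …, Y_m on V^{⊗m} pairwise commute: Y_k Y_l = Y_l Y_k for all 1 ≤ k, l ≤ m. -/
open Matrix Kronecker BigOperators

/-- `Ř_k` (1-based index `k`, `1 ≤ k ≤ m−1`): the operator on `V^{⊗m}` acting as `Ř`
in the tensor factors `(k, k+1)` (1-based) and as the identity elsewhere.
(For out-of-range `k` it is defined to be the identity.) -/
noncomputable def Rop (n m : ℕ) (r s : ℂ) (k : ℕ) :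
    Matrix (Fin m → Fin n) (Fin m → Fin n) ℂ :=
  if h : 1 ≤ k ∧ k < m then op2At n m (Rhat n r s) ⟨k - 1, by omega⟩ ⟨k, h.2⟩ else 1

/-- The Jucys-Murphy operators on `V^{⊗m}` (1-based index):
`Y_1 = Id` and `Y_{k+1} = (s/r) Ř_k Y_k Ř_k`. -/
noncomputable def JM (n m : ℕ) (r s : ℂ) : ℕ → Matrix (Fin m → Fin n) (Fin m → Fin n) ℂ
  | 0 => 1
  | 1 => 1
  | (k + 2) => (s * r⁻¹) • (Rop n m r s (k + 1) * JM n m r s (k + 1) * Rop n m r s (k + 1))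

/-! Write `σ_k = Ř_{k+1}`. Then `Y_{k+1} = (s/r)^k J_k`, where `J_0 = 1` and
`J_{k+1} = σ_k J_k σ_k`, and such "Jucys–Murphy elements" of any monoid commute as soon as
distant `σ_i` commute and neighbouring ones satisfy the braid relation. Distant `Ř_i` act on
disjoint tensor factors, and the braid relation is the Yang–Baxter equation
`Ř₁₂ Ř₂₃ Ř₁₂ = Ř₂₃ Ř₁₂ Ř₂₃` on `V ⊗ V ⊗ V`. Since `Ř` is a weighted flip plus a diagonal
matrix, both sides expand into sums of weighted permutation matrices, which are compared
entrywise by cases on the relative order of the three indices. -/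

open Function

section JucysMurphy

variable {α : Type*} [Monoid α]

def jucysMurphy (σ : ℕ → α) : ℕ → α
  | 0 => 1
  | k + 1 => σ k * jucysMurphy σ k * σ k

theorem commute_jucysMurphy_of_lt {σ : ℕ → α} {j k : ℕ}
    (hfar : ∀ i, i + 2 ≤ k → Commute (σ i) (σ k)) (hjk : j < k) :
    Commute (σ k) (jucysMurphy σ j) := by
  induction j with
  | zero => exact Commute.one_right _
  | succ j ih =>
    have hσ := (hfar j (by omega)).symm
    exact (hσ.mul_right (ih (by omega))).mul_right hσ

theorem Commute.sandwich_of_braid {A B X : α} (hbraid : A * B * A = B * A * B)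
    (hBX : Commute B X) (hX : Commute X (A * X * A)) :
    Commute (A * X * A) (B * (A * X * A) * B) := by
  have hb : ∀ t, t * A * B * A = t * B * A * B := fun t => by
    simpa only [mul_assoc] using congrArg (t * ·) hbraid
  have hc : ∀ t, t * B * X = t * X * B := fun t => by
    simpa only [mul_assoc] using congrArg (t * ·) hBX.eq
  have hi : ∀ t, t * X * A * X * A = t * A * X * A * X := fun t => by
    simpa only [mul_assoc] using congrArg (t * ·) hX.eq
  unfold Commute SemiconjBy
  simp only [← mul_assoc]
  calc A * X * A * B * A * X * A * B
      = A * X * B * A * B * X * A * B := by rw [hb]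
    _ = A * B * X * A * B * X * A * B := by rw [← hc A]
    _ = A * B * X * A * X * B * A * B := by rw [hc (A * B * X * A)]
    _ = A * B * X * A * X * A * B * A := by rw [← hb (A * B * X * A * X)]
    _ = A * B * A * X * A * X * B * A := by rw [hi (A * B)]
    _ = B * A * B * X * A * X * B * A := by rw [hbraid]
    _ = B * A * X * B * A * X * B * A := by rw [hc (B * A)]
    _ = B * A * X * B * A * B * X * A := by rw [← hc (B * A * X * B * A)]
    _ = B * A * X * A * B * A * X * A := by rw [← hb (B * A * X)]

theorem commute_jucysMurphy_add_one {σ : ℕ → α} {N : ℕ}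
    (hfar : ∀ i j, i + 2 ≤ j → j < N → Commute (σ i) (σ j))
    (hbraid : ∀ i, i + 1 < N → σ i * σ (i + 1) * σ i = σ (i + 1) * σ i * σ (i + 1))
    {k : ℕ} (hk : k < N) :
    Commute (jucysMurphy σ k) (jucysMurphy σ (k + 1)) := by
  induction k with
  | zero => exact Commute.one_left _
  | succ k ih =>
    exact Commute.sandwich_of_braid (hbraid k hk)
      (commute_jucysMurphy_of_lt (fun i hi => hfar i (k + 1) hi hk) k.lt_succ_self)
      (ih (by omega))

theorem commute_jucysMurphy {σ : ℕ → α} {N : ℕ}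
    (hfar : ∀ i j, i + 2 ≤ j → j < N → Commute (σ i) (σ j))
    (hbraid : ∀ i, i + 1 < N → σ i * σ (i + 1) * σ i = σ (i + 1) * σ i * σ (i + 1))
    {k l : ℕ} (hk : k ≤ N) (hl : l ≤ N) :
    Commute (jucysMurphy σ k) (jucysMurphy σ l) := by
  wlog hlk : l < k generalizing k l
  · rcases (not_lt.mp hlk).eq_or_lt with rfl | hkl
    · exact Commute.refl _
    · exact (this hl hk hkl).symm
  induction k with
  | zero => omega
  | succ k ih =>
    rcases (Nat.lt_succ_iff.mp hlk).eq_or_lt with rfl | hlk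
    · exact (commute_jucysMurphy_add_one hfar hbraid hk).symm
    · have hσ := commute_jucysMurphy_of_lt (fun i hi => hfar i k hi hk) hlk
      exact (hσ.mul_left (ih (by omega) hlk)).mul_left hσ

end JucysMurphy

namespace Matrix

variable {α β R : Type*} [DecidableEq α]

def monomialMatrix [Zero R] (w : α → R) (σ : α → α) : Matrix α α R :=
  of fun p q => if σ p = q then w p else 0

theorem monomialMatrix_apply [Zero R] (w : α → R) (σ : α → α) (p q : α) :
    monomialMatrix w σ p q = if σ p = q then w p else 0 :=
  rfl

theorem one_eq_monomialMatrix [Zero R] [One R] :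
    (1 : Matrix α α R) = monomialMatrix (1 : α → R) id := by
  ext p q
  simp [monomialMatrix_apply, one_apply]

theorem monomialMatrix_mul_monomialMatrix [Fintype α] [NonUnitalNonAssocSemiring R]
    (w v : α → R) (σ τ : α → α) :
    monomialMatrix w σ * monomialMatrix v τ =
      monomialMatrix (fun p => w p * v (σ p)) (τ ∘ σ) := by
  ext p q
  rw [mul_apply, Finset.sum_eq_single (σ p)
    (fun j _ hj => by simp [monomialMatrix_apply, Ne.symm hj]) (by simp)]
  simp [monomialMatrix_apply]

theorem monomialMatrix_kronecker_monomialMatrix [DecidableEq β] [MulZeroClass R]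
    (w : α → R) (σ : α → α) (v : β → R) (τ : β → β) :
    monomialMatrix w σ ⊗ₖ monomialMatrix v τ =
      monomialMatrix (fun p => w p.1 * v p.2) (Prod.map σ τ) := by
  ext ⟨p, p'⟩ ⟨q, q'⟩
  simp only [kroneckerMap_apply, monomialMatrix_apply, Prod.map, Prod.mk.injEq, ite_and]
  split_ifs <;> simp

theorem submatrix_monomialMatrix [DecidableEq β] [Zero R] (w : α → R) (σ : α → α) (e : β ≃ α) :
    (monomialMatrix w σ).submatrix e e = monomialMatrix (w ∘ e) (e.symm ∘ σ ∘ e) := by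
  ext p q
  simp [monomialMatrix_apply, Equiv.symm_apply_eq]

def kroneckerOneAssoc [MulZeroOneClass R] (M : Matrix (α × α) (α × α) R) :
    Matrix (α × α × α) (α × α × α) R :=
  (M ⊗ₖ (1 : Matrix α α R)).submatrix (Equiv.prodAssoc α α α).symm (Equiv.prodAssoc α α α).symm

end Matrix

noncomputable def swapWeight (r s : ℂ) {n : ℕ} (p : Fin n × Fin n) : ℂ :=
  if p.2 < p.1 then r else if p.1 < p.2 then s⁻¹ else 1

noncomputable def diagWeight (r s : ℂ) {n : ℕ} (p : Fin n × Fin n) : ℂ :=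
  if p.2 < p.1 then 1 - r * s⁻¹ else 0

theorem Rhat_eq_monomialMatrix_add (n : ℕ) (r s : ℂ) :
    Rhat n r s =
      monomialMatrix (swapWeight r s) Prod.swap + monomialMatrix (diagWeight r s) id := by
  ext ⟨a, b⟩ ⟨x, y⟩
  simp only [Rhat, ← Finset.sum_filter, Matrix.add_apply, Matrix.smul_apply, Matrix.sum_apply,
    kroneckerMap_apply, single_apply]
  simp only [ite_and, mul_ite, mul_one, mul_zero, Finset.sum_ite_eq', Finset.mem_univ, ↓reduceIte,
    Finset.sum_ite_irrel, Finset.mem_filter, true_and, Finset.sum_const_zero, smul_eq_mul,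
    ← Finset.sum_filter, monomialMatrix_apply, Prod.swap_prod_mk, Prod.mk.injEq, swapWeight, id_eq,
    diagWeight]
  grind

theorem Rhat_yangBaxter (n : ℕ) (r s : ℂ) :
    kroneckerOneAssoc (Rhat n r s) * (1 ⊗ₖ Rhat n r s) * kroneckerOneAssoc (Rhat n r s) =
      (1 ⊗ₖ Rhat n r s) * kroneckerOneAssoc (Rhat n r s) * (1 ⊗ₖ Rhat n r s) := by
  simp only [kroneckerOneAssoc, Rhat_eq_monomialMatrix_add, one_eq_monomialMatrix, add_kronecker,
    kronecker_add, monomialMatrix_kronecker_monomialMatrix, submatrix_add, Pi.add_apply,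
    submatrix_monomialMatrix, add_mul, mul_add, monomialMatrix_mul_monomialMatrix]
  ext ⟨a, b, c⟩ ⟨d, e, f⟩
  simp only [swapWeight, Pi.one_apply, mul_one, Function.comp_apply, Equiv.prodAssoc_symm_apply,
    Equiv.symm_symm, Prod.map_apply, Prod.swap_prod_mk, id_eq, Equiv.prodAssoc_apply, mul_ite,
    one_mul, ite_mul, Prod.mk.eta, diagWeight, Prod.map_id, CompTriple.comp_eq, zero_mul,
    Equiv.self_comp_symm, Prod.map_fst, Prod.map_snd, Prod.fst_swap, Prod.snd_swap, mul_zero,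
    Matrix.add_apply, monomialMatrix_apply, Prod.mk.injEq]
  grind

section ThreeSites

variable {ι V R : Type*} [DecidableEq ι] [Fintype ι] [DecidableEq V]

def op3At [Zero R] (P : Matrix (V × V × V) (V × V × V) R) (a b c : ι) :
    Matrix (ι → V) (ι → V) R :=
  of fun f g =>
    if ∀ l, l ≠ a → l ≠ b → l ≠ c → f l = g l then P (f a, f b, f c) (g a, g b, g c) else 0

theorem op3At_apply [Zero R] (P : Matrix (V × V × V) (V × V × V) R) (a b c : ι) (f g : ι → V) :
    op3At P a b c f g =
      if ∀ l, l ≠ a → l ≠ b → l ≠ c → f l = g l then P (f a, f b, f c) (g a, g b, g c) else 0 :=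
  rfl

variable [Fintype V]

theorem sum_ite_eq_off_three [AddCommMonoid R] {a b c : ι} (hab : a ≠ b) (hac : a ≠ c)
    (hbc : b ≠ c) (f : ι → V) (F : (ι → V) → R) :
    ∑ h, (if ∀ l, l ≠ a → l ≠ b → l ≠ c → f l = h l then F h else 0) =
      ∑ t : V × V × V, F (update (update (update f a t.1) b t.2.1) c t.2.2) := by
  rw [← Finset.sum_filter]
  have hfilter : ({h | ∀ l, l ≠ a → l ≠ b → l ≠ c → f l = h l} : Finset (ι → V)) =
      Finset.univ.image fun t : V × V × V => update (update (update f a t.1) b t.2.1) c t.2.2 := by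
    ext h
    simp only [Finset.mem_filter, Finset.mem_univ, true_and, Finset.mem_image]
    constructor
    · intro hh
      refine ⟨(h a, h b, h c), funext fun l => ?_⟩
      simp only [update_apply]
      split_ifs <;> subst_vars <;> simp_all
    · rintro ⟨t, rfl⟩ l hla hlb hlc
      simp [hla, hlb, hlc]
  rw [hfilter, Finset.sum_image]
  intro t _ t' _ htt
  have := congrFun htt
  ext
  · simpa [hab, hac] using this a
  · simpa [hbc] using this b
  · simpa using this c

theorem op3At_mul [Semiring R] (P Q : Matrix (V × V × V) (V × V × V) R) {a b c : ι}
    (hab : a ≠ b) (hac : a ≠ c) (hbc : b ≠ c) :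
    op3At P a b c * op3At Q a b c = op3At (P * Q) a b c := by
  ext f g
  simp only [mul_apply, op3At_apply, ite_mul, zero_mul]
  rw [sum_ite_eq_off_three hab hac hbc]
  have hoff : ∀ t : V × V × V, (∀ l, l ≠ a → l ≠ b → l ≠ c →
      update (update (update f a t.1) b t.2.1) c t.2.2 l = g l) ↔
      ∀ l, l ≠ a → l ≠ b → l ≠ c → f l = g l :=
    fun t => forall_congr' fun l => by
      constructor <;> intro h hla hlb hlc <;> simpa [hla, hlb, hlc] using h hla hlb hlc
  simp only [hoff]
  split_ifs
  · simp [hab, hac, hbc]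
  · simp

end ThreeSites

section OnTensorPower

variable {n m : ℕ}

theorem op2At_apply (M : Matrix (Fin n × Fin n) (Fin n × Fin n) ℂ) (a b : Fin m)
    (f g : Fin m → Fin n) :
    op2At n m M a b f g =
      if ∀ l, l ≠ a → l ≠ b → f l = g l then M (f a, f b) (g a, g b) else 0 := by
  simp [op2At, Finset.prod_boole, mul_ite, and_imp]

theorem op2At_eq_op3At_kroneckerOneAssoc (M : Matrix (Fin n × Fin n) (Fin n × Fin n) ℂ)
    {a b c : Fin m} (hac : a ≠ c) (hbc : b ≠ c) :
    op2At n m M a b = op3At (kroneckerOneAssoc M) a b c := by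
  ext f g
  simp only [op2At_apply, op3At_apply, kroneckerOneAssoc, submatrix_apply,
    Equiv.prodAssoc_symm_apply, kroneckerMap_apply, one_apply, mul_ite, mul_one, mul_zero]
  by_cases hc : f c = g c
  · have : (∀ l, l ≠ a → l ≠ b → f l = g l) ↔ ∀ l, l ≠ a → l ≠ b → l ≠ c → f l = g l :=
      ⟨fun h l ha hb _ => h l ha hb, fun h l ha hb =>
        if hlc : l = c then hlc ▸ hc else h l ha hb hlc⟩
    simp only [this, hc, if_true]
  · have : ¬ ∀ l, l ≠ a → l ≠ b → f l = g l := fun h => hc (h c hac.symm hbc.symm)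
    simp [this, hc]

theorem op2At_eq_op3At_one_kronecker (M : Matrix (Fin n × Fin n) (Fin n × Fin n) ℂ)
    {a b c : Fin m} (hab : a ≠ b) (hac : a ≠ c) :
    op2At n m M b c = op3At (1 ⊗ₖ M) a b c := by
  ext f g
  simp only [op2At_apply, op3At_apply, kroneckerMap_apply, one_apply, ite_mul, one_mul, zero_mul]
  by_cases ha : f a = g a
  · have : (∀ l, l ≠ b → l ≠ c → f l = g l) ↔ ∀ l, l ≠ a → l ≠ b → l ≠ c → f l = g l :=
      ⟨fun h l _ hb hc => h l hb hc, fun h l hb hc =>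
        if hla : l = a then hla ▸ ha else h l hla hb hc⟩
    simp only [this, ha, if_true]
  · have : ¬ ∀ l, l ≠ b → l ≠ c → f l = g l := fun h => ha (h a hab hac)
    simp [this, ha]

theorem op2At_mul_op2At_apply_of_disjoint (M N : Matrix (Fin n × Fin n) (Fin n × Fin n) ℂ)
    {a b c d : Fin m} (hac : a ≠ c) (had : a ≠ d) (hbc : b ≠ c) (hbd : b ≠ d)
    (f g : Fin m → Fin n) :
    (op2At n m M a b * op2At n m N c d) f g =
      if ∀ l, l ≠ a → l ≠ b → l ≠ c → l ≠ d → f l = g l then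
        M (f a, f b) (g a, g b) * N (f c, f d) (g c, g d) else 0 := by
  set h₀ := update (update f a (g a)) b (g b)
  have h₀a : h₀ a = g a := by by_cases hab : a = b <;> simp [h₀, hab]
  have h₀b : h₀ b = g b := by simp [h₀]
  have h₀_off : ∀ l, l ≠ a → l ≠ b → h₀ l = f l := fun l ha hb => by simp [h₀, ha, hb]
  rw [mul_apply, Finset.sum_eq_single h₀]
  · have hcond : (∀ l, l ≠ c → l ≠ d → h₀ l = g l) ↔
        ∀ l, l ≠ a → l ≠ b → l ≠ c → l ≠ d → f l = g l := by
      refine ⟨fun h l ha hb hc hd => h₀_off l ha hb ▸ h l hc hd, fun h l hc hd => ?_⟩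
      by_cases hla : l = a
      · exact hla ▸ h₀a
      by_cases hlb : l = b
      · exact hlb ▸ h₀b
      exact (h₀_off l hla hlb).trans (h l hla hlb hc hd)
    simp only [op2At_apply, hcond, h₀a, h₀b, h₀_off c hac.symm hbc.symm, h₀_off d had.symm hbd.symm]
    rw [if_pos fun l ha hb => (h₀_off l ha hb).symm]
    split_ifs <;> simp
  · intro h _ hne
    rw [op2At_apply, op2At_apply]
    split_ifs with hfh hhg
    · refine absurd (funext fun l => ?_) hne
      by_cases hla : l = a
      · rw [hla, h₀a]; exact hhg a hac had
      by_cases hlb : l = b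
      · rw [hlb, h₀b]; exact hhg b hbc hbd
      rw [h₀_off l hla hlb]; exact (hfh l hla hlb).symm
    all_goals simp
  · simp

theorem op2At_commute_of_disjoint (M N : Matrix (Fin n × Fin n) (Fin n × Fin n) ℂ)
    {a b c d : Fin m} (hac : a ≠ c) (had : a ≠ d) (hbc : b ≠ c) (hbd : b ≠ d) :
    Commute (op2At n m M a b) (op2At n m N c d) := by
  ext f g
  rw [op2At_mul_op2At_apply_of_disjoint M N hac had hbc hbd,
    op2At_mul_op2At_apply_of_disjoint N M hac.symm hbc.symm had.symm hbd.symm, mul_comm]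
  congr 1
  exact propext (forall_congr' fun l => by tauto)

end OnTensorPower

section Rop

variable {n m : ℕ} {r s : ℂ}

theorem Rop_add_one {k : ℕ} (hk : k + 1 < m) :
    Rop n m r s (k + 1) = op2At n m (Rhat n r s) ⟨k, by omega⟩ ⟨k + 1, hk⟩ := by
  simp [Rop, hk]

theorem Rop_add_one_commute {i j : ℕ} (hij : i + 2 ≤ j) (hj : j + 1 < m) :
    Commute (Rop n m r s (i + 1)) (Rop n m r s (j + 1)) := by
  rw [Rop_add_one (by omega), Rop_add_one hj]
  apply op2At_commute_of_disjoint <;> simp only [ne_eq, Fin.ext_iff] <;> omega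

theorem Rop_add_one_braid {k : ℕ} (hk : k + 2 < m) :
    Rop n m r s (k + 1) * Rop n m r s (k + 2) * Rop n m r s (k + 1) =
      Rop n m r s (k + 2) * Rop n m r s (k + 1) * Rop n m r s (k + 2) := by
  set a : Fin m := ⟨k, by omega⟩
  set b : Fin m := ⟨k + 1, by omega⟩
  set c : Fin m := ⟨k + 2, hk⟩
  have hab : a ≠ b := by simp [a, b, Fin.ext_iff]
  have hac : a ≠ c := by simp [a, c, Fin.ext_iff]
  have hbc : b ≠ c := by simp [b, c, Fin.ext_iff]
  have h₁ : Rop n m r s (k + 1) = op3At (kroneckerOneAssoc (Rhat n r s)) a b c := by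
    rw [Rop_add_one (by omega), op2At_eq_op3At_kroneckerOneAssoc _ hac hbc]
  have h₂ : Rop n m r s (k + 2) = op3At (1 ⊗ₖ Rhat n r s) a b c := by
    rw [Rop_add_one hk, ← op2At_eq_op3At_one_kronecker _ hab hac]
  simp only [h₁, h₂, op3At_mul _ _ hab hac hbc, Rhat_yangBaxter]

end Rop

theorem JM_add_one_eq_smul_jucysMurphy (n m : ℕ) (r s : ℂ) (k : ℕ) :
    JM n m r s (k + 1) = (s * r⁻¹) ^ k • jucysMurphy (fun i => Rop n m r s (i + 1)) k := by
  induction k with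
  | zero => simp [JM, jucysMurphy]
  | succ k ih =>
    rw [JM, ih, jucysMurphy, mul_smul_comm, smul_mul_assoc, smul_smul, pow_succ']

theorem JM_commute_general (n : ℕ) (r s : ℂ)
    (m : ℕ) (k l : ℕ) (hk1 : 1 ≤ k) (hk2 : k ≤ m)
    (hl1 : 1 ≤ l) (hl2 : l ≤ m) :
    JM n m r s k * JM n m r s l = JM n m r s l * JM n m r s k := by
  obtain ⟨k, rfl⟩ := Nat.exists_eq_add_of_le' hk1
  obtain ⟨l, rfl⟩ := Nat.exists_eq_add_of_le' hl1
  have hJ := commute_jucysMurphy (σ := fun i => Rop n m r s (i + 1)) (N := m - 1)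
    (fun _ j hij hj => Rop_add_one_commute hij (show j + 1 < m by omega))
    (fun i hi => Rop_add_one_braid (show i + 2 < m by omega))
    (show k ≤ m - 1 by omega) (show l ≤ m - 1 by omega)
  rw [JM_add_one_eq_smul_jucysMurphy, JM_add_one_eq_smul_jucysMurphy]
  exact ((hJ.smul_left _).smul_right _).eq

/-- **Jucys-Murphy operators pairwise commute.** `Y_k Y_l = Y_l Y_k` on `V^{⊗m}` for all
`1 ≤ k, l ≤ m`. -/
theorem JM_commute (n : ℕ) (hn : 1 ≤ n) (r s : ℂ) (hr : r ≠ 0) (hs : s ≠ 0)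
    (m : ℕ) (hm : 2 ≤ m) (k l : ℕ) (hk1 : 1 ≤ k) (hk2 : k ≤ m)
    (hl1 : 1 ≤ l) (hl2 : l ≤ m) :
    JM n m r s k * JM n m r s l = JM n m r s l * JM n m r s k :=
  JM_commute_general n r s m k l hk1 hk2 hl1 hl2
end
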